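/- arXiv:2509.10878 — 2 statements merged into one kernel-verified Lean document; each statement's English description precedes it below -/
import Mathlib

section
/- Every value |χ(d,ν)| for d ∈ {0,±1,...,±B} and ν ∈ {0,±1,...,±(A−1)} equals |r_{a₁,a₂}(d')| for some a₁, a₂ ∈ {1,...,A} and some d' ∈ {0,...,B}; hence minimizing all cross-correlations of the modulated sequence set minimizes all ambiguity-function sidelobes in that delay–Doppler region. -/
open ComplexConjugate

private lemma norm_exp_one {z : ℂ} {t : ℝ} (h : z = (t : ℂ) * Complex.I) :
    ‖Complex.exp z‖ = 1 := by
  rw [h, Complex.norm_exp_ofReal_mul_I]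

private lemma sum_shift (L : ℕ) (c : ℤ) (f : ℤ → ℂ) :
    ∑ ℓ ∈ Finset.range L, f ((ℓ : ℤ) + c) = ∑ m ∈ Finset.Icc c (c + L - 1), f m := by
  refine Finset.sum_nbij' (fun ℓ => (ℓ : ℤ) + c) (fun m => (m - c).toNat) ?_ ?_ ?_ ?_ ?_
  · intro a ha; simp only [Finset.mem_range] at ha; simp only [Finset.mem_Icc]; omega
  · intro a ha; simp only [Finset.mem_Icc] at ha; simp only [Finset.mem_range]; omega
  · intro a ha; simp only [Finset.mem_range] at ha; omega
  · intro a ha; simp only [Finset.mem_Icc] at ha; omega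
  · intro a _; rfl

private lemma sum_range_int (L : ℕ) (f : ℤ → ℂ) :
    ∑ ℓ ∈ Finset.range L, f (ℓ : ℤ) = ∑ m ∈ Finset.Icc (0 : ℤ) ((L : ℤ) - 1), f m := by
  have := sum_shift L 0 f
  simpa using this


private lemma shift_eq (L : ℕ) (d : ℤ) (hd : d < 0) (t : ℤ → ℂ)
    (h0 : ∀ m, (L : ℤ) ≤ m → t m = 0) (h1 : ∀ m, m + d < 0 → t m = 0) :
    ∑ ℓ ∈ Finset.range L, t ((ℓ : ℤ) + -d) = ∑ ℓ ∈ Finset.range L, t (ℓ : ℤ) := by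
  rw [sum_shift, sum_range_int]
  have e1 : ∑ m ∈ Finset.Icc (-d) (-d + (L : ℤ) - 1), t m
      = ∑ m ∈ Finset.Icc (-d) ((L : ℤ) - 1), t m := by
    refine (Finset.sum_subset (Finset.Icc_subset_Icc (le_refl _) (by omega)) ?_).symm
    intro x hx hx'
    simp only [Finset.mem_Icc] at hx hx'
    exact h0 x (by omega)
  have e2 : ∑ m ∈ Finset.Icc (0 : ℤ) ((L : ℤ) - 1), t m
      = ∑ m ∈ Finset.Icc (-d) ((L : ℤ) - 1), t m := by
    refine (Finset.sum_subset (Finset.Icc_subset_Icc (by omega) (le_refl _)) ?_).symm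
    intro x hx hx'
    simp only [Finset.mem_Icc] at hx hx'
    exact h1 x (by omega)
  rw [e1, e2]

/-- Every ambiguity-function value `|χ(d,ν)|` with `d ∈ {0,±1,…,±B}` and
`ν ∈ {0,±1,…,±(A−1)}` equals `|r_{a₁,a₂}(d')|` for some `a₁, a₂ ∈ {1,…,A}` and
some `d' ∈ {0,…,B}`. -/
theorem stmt_4 (L A B : ℕ) (hA : 1 ≤ A) (xt : ℤ → ℂ)
    (hxt : ∀ ℓ : ℤ, (ℓ < 0 ∨ (L : ℤ) ≤ ℓ) → xt ℓ = 0)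
    (xa : ℕ → ℤ → ℂ)
    (hxa : ∀ a : ℕ, ∀ ℓ : ℤ,
      xa a ℓ = xt ℓ * Complex.exp (2 * Real.pi * Complex.I * ((a : ℂ) - 1) * (ℓ : ℂ) / (L : ℂ)))
    (r : ℕ → ℕ → ℤ → ℂ)
    (hr : ∀ a₁ a₂ : ℕ, ∀ d : ℤ,
      r a₁ a₂ d = ∑ ℓ ∈ Finset.range L, xa a₁ ℓ * conj (xa a₂ ((ℓ : ℤ) - d)))
    (χ : ℤ → ℤ → ℂ)
    (hχ : ∀ d ν : ℤ, χ d ν =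
      ∑ ℓ ∈ Finset.range L,
        xt ℓ * conj (xt ((ℓ : ℤ) - d)) *
          Complex.exp (2 * Real.pi * Complex.I * (((ℓ : ℤ) - d : ℤ) : ℂ) * (ν : ℂ) / (L : ℂ))) :
    ∀ d ν : ℤ, |d| ≤ (B : ℤ) → |ν| ≤ (A : ℤ) - 1 →
      ∃ a₁ a₂ : ℕ, ∃ d' : ℤ,
        1 ≤ a₁ ∧ a₁ ≤ A ∧ 1 ≤ a₂ ∧ a₂ ≤ A ∧ 0 ≤ d' ∧ d' ≤ (B : ℤ) ∧
          ‖χ d ν‖ = ‖r a₁ a₂ d'‖ := by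
  intro d ν hd hν
  rw [abs_le] at hd hν
  -- trivial case L = 0
  rcases Nat.eq_zero_or_pos L with hL0 | hL
  · refine ⟨1, 1, 0, le_refl 1, hA, le_refl 1, hA, le_refl 0, by positivity, ?_⟩
    rw [hχ, hr]; simp [hL0]
  have hLC : (L : ℂ) ≠ 0 := Nat.cast_ne_zero.mpr (by omega)
  -- Case A: d ≥ 0.  For a₁ - a₂ = ν we have r a₁ a₂ d = phase • χ d ν.
  have caseA : ∀ (a₁ a₂ : ℕ) (hA12 : (a₁ : ℂ) = (a₂ : ℂ) + (ν : ℂ)),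
      ‖χ d ν‖ = ‖r a₁ a₂ d‖ := by
    intro a₁ a₂ hA12
    have key : r a₁ a₂ d =
        Complex.exp (2 * (Real.pi : ℂ) * Complex.I * (((a₂ : ℂ) - 1 + (ν : ℂ)) * (d : ℂ)) / (L : ℂ)) * χ d ν := by
      rw [hr, hχ, Finset.mul_sum]
      refine Finset.sum_congr rfl fun ℓ _ => ?_
      rw [hxa, hxa, map_mul, ← Complex.exp_conj]
      have hconj : (starRingEnd ℂ) (2 * (Real.pi : ℂ) * Complex.I * ((a₂ : ℂ) - 1) * (((ℓ : ℤ) - d : ℤ) : ℂ) / (L : ℂ))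
          = 2 * (Real.pi : ℂ) * (-Complex.I) * ((a₂ : ℂ) - 1) * (((ℓ : ℤ) - d : ℤ) : ℂ) / (L : ℂ) := by
        simp [map_div₀, map_ofNat, Complex.conj_I]
      rw [hconj]
      have hE : Complex.exp (2 * (Real.pi : ℂ) * Complex.I * ((a₁ : ℂ) - 1) * ((ℓ : ℕ) : ℂ) / (L : ℂ)) *
            Complex.exp (2 * (Real.pi : ℂ) * (-Complex.I) * ((a₂ : ℂ) - 1) * (((ℓ : ℤ) - d : ℤ) : ℂ) / (L : ℂ))
          = Complex.exp (2 * (Real.pi : ℂ) * Complex.I * (((a₂ : ℂ) - 1 + (ν : ℂ)) * (d : ℂ)) / (L : ℂ)) *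
            Complex.exp (2 * (Real.pi : ℂ) * Complex.I * (((ℓ : ℤ) - d : ℤ) : ℂ) * (ν : ℂ) / (L : ℂ)) := by
        rw [← Complex.exp_add, ← Complex.exp_add]
        congr 1
        push_cast
        rw [hA12]
        field_simp
        ring
      linear_combination (xt ℓ * (starRingEnd ℂ) (xt ((ℓ : ℤ) - d))) * hE
    rw [key, norm_mul, norm_exp_one (t := 2 * Real.pi * (((a₂ : ℝ) - 1 + (ν : ℝ)) * (d : ℝ)) / (L : ℝ)) (by push_cast; ring), one_mul]
  -- Case B: d < 0.
  have caseB : ∀ (a₁ a₂ : ℕ) (hA12 : (a₂ : ℂ) = (a₁ : ℂ) + (ν : ℂ)), d < 0 →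
      ‖χ d ν‖ = ‖r a₁ a₂ (-d)‖ := by
    intro a₁ a₂ hA12 hdneg
    set t : ℤ → ℂ := fun m => xt m * (starRingEnd ℂ) (xt (m + d)) *
      Complex.exp (2 * (Real.pi : ℂ) * Complex.I * (-(ν : ℂ)) * (m : ℂ) / (L : ℂ)) with ht
    have step1 : (starRingEnd ℂ) (χ d ν) = ∑ ℓ ∈ Finset.range L, t ((ℓ : ℤ) + -d) := by
      rw [hχ, map_sum]
      refine Finset.sum_congr rfl fun ℓ _ => ?_
      rw [ht]
      simp only []
      rw [map_mul, map_mul, Complex.conj_conj, ← Complex.exp_conj]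
      have h1 : ((ℓ : ℤ) + -d + d : ℤ) = (ℓ : ℤ) := by ring
      rw [h1]
      have hconj : (starRingEnd ℂ) (2 * (Real.pi : ℂ) * Complex.I * (((ℓ : ℤ) - d : ℤ) : ℂ) * (ν : ℂ) / (L : ℂ))
          = 2 * (Real.pi : ℂ) * (-Complex.I) * (((ℓ : ℤ) - d : ℤ) : ℂ) * (ν : ℂ) / (L : ℂ) := by
        simp [map_div₀, map_ofNat, Complex.conj_I]
      rw [hconj]
      have hE : 2 * (Real.pi : ℂ) * (-Complex.I) * (((ℓ : ℤ) - d : ℤ) : ℂ) * (ν : ℂ) / (L : ℂ)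
          = 2 * (Real.pi : ℂ) * Complex.I * (-(ν : ℂ)) * (((ℓ : ℤ) + -d : ℤ) : ℂ) / (L : ℂ) := by
        push_cast; ring
      rw [hE]
      push_cast
      ring
    have step1' : (starRingEnd ℂ) (χ d ν) = ∑ ℓ ∈ Finset.range L, t (ℓ : ℤ) := by
      rw [step1]
      refine shift_eq L d hdneg t ?_ ?_
      · intro m hm; rw [ht]; simp only []
        rw [hxt m (Or.inr hm)]; ring
      · intro m hm; rw [ht]; simp only []
        rw [hxt (m + d) (Or.inl hm)]; simp
    have step2 : r a₁ a₂ (-d) =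
        Complex.exp (2 * (Real.pi : ℂ) * Complex.I * ((1 - (a₂ : ℂ)) * (d : ℂ)) / (L : ℂ)) *
          ∑ ℓ ∈ Finset.range L, t (ℓ : ℤ) := by
      rw [hr, Finset.mul_sum]
      refine Finset.sum_congr rfl fun ℓ _ => ?_
      rw [hxa, hxa, map_mul, ← Complex.exp_conj, ht]
      simp only []
      have h1 : ((ℓ : ℤ) - -d : ℤ) = ((ℓ : ℤ) + d : ℤ) := by ring
      rw [h1]
      have hconj : (starRingEnd ℂ) (2 * (Real.pi : ℂ) * Complex.I * ((a₂ : ℂ) - 1) * (((ℓ : ℤ) + d : ℤ) : ℂ) / (L : ℂ))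
          = 2 * (Real.pi : ℂ) * (-Complex.I) * ((a₂ : ℂ) - 1) * (((ℓ : ℤ) + d : ℤ) : ℂ) / (L : ℂ) := by
        simp [map_div₀, map_ofNat, Complex.conj_I]
      rw [hconj]
      have hE : Complex.exp (2 * (Real.pi : ℂ) * Complex.I * ((a₁ : ℂ) - 1) * ((ℓ : ℕ) : ℂ) / (L : ℂ)) *
            Complex.exp (2 * (Real.pi : ℂ) * (-Complex.I) * ((a₂ : ℂ) - 1) * (((ℓ : ℤ) + d : ℤ) : ℂ) / (L : ℂ))
          = Complex.exp (2 * (Real.pi : ℂ) * Complex.I * ((1 - (a₂ : ℂ)) * (d : ℂ)) / (L : ℂ)) *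
            Complex.exp (2 * (Real.pi : ℂ) * Complex.I * (-(ν : ℂ)) * (((ℓ : ℤ)) : ℂ) / (L : ℂ)) := by
        rw [← Complex.exp_add, ← Complex.exp_add]
        congr 1
        push_cast
        rw [hA12]
        field_simp
        ring
      linear_combination (xt ℓ * (starRingEnd ℂ) (xt ((ℓ : ℤ) + d))) * hE
    have final : r a₁ a₂ (-d) =
        Complex.exp (2 * (Real.pi : ℂ) * Complex.I * ((1 - (a₂ : ℂ)) * (d : ℂ)) / (L : ℂ)) *
          (starRingEnd ℂ) (χ d ν) := by rw [step2, ← step1']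
    rw [final, norm_mul,
      norm_exp_one (t := 2 * Real.pi * ((1 - (a₂ : ℝ)) * (d : ℝ)) / (L : ℝ)) (by push_cast; ring),
      one_mul, RCLike.norm_conj]
  -- assemble
  rcases le_or_gt 0 d with hd0 | hd0
  · rcases le_or_gt 0 ν with hν0 | hν0
    · refine ⟨ν.toNat + 1, 1, d, by omega, by omega, le_refl 1, hA, hd0, by omega, ?_⟩
      refine caseA _ _ ?_
      have hh : ((ν.toNat : ℕ) : ℂ) = (ν : ℂ) := by
        exact_mod_cast congrArg (fun z : ℤ => (z : ℂ)) (Int.toNat_of_nonneg hν0)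
      push_cast; rw [hh]; ring
    · refine ⟨1, (-ν).toNat + 1, d, le_refl 1, hA, by omega, by omega, hd0, by omega, ?_⟩
      refine caseA _ _ ?_
      have hh : (((-ν).toNat : ℕ) : ℂ) = -(ν : ℂ) := by
        exact_mod_cast congrArg (fun z : ℤ => (z : ℂ)) (Int.toNat_of_nonneg (by omega : (0:ℤ) ≤ -ν))
      push_cast; rw [hh]; ring
  · rcases le_or_gt 0 ν with hν0 | hν0
    · refine ⟨1, ν.toNat + 1, -d, le_refl 1, hA, by omega, by omega, by omega, by omega, ?_⟩
      refine caseB _ _ ?_ hd0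
      have hh : ((ν.toNat : ℕ) : ℂ) = (ν : ℂ) := by
        exact_mod_cast congrArg (fun z : ℤ => (z : ℂ)) (Int.toNat_of_nonneg hν0)
      push_cast; rw [hh]; ring
    · refine ⟨(-ν).toNat + 1, 1, -d, by omega, by omega, le_refl 1, hA, by omega, by omega, ?_⟩
      refine caseB _ _ ?_ hd0
      have hh : (((-ν).toNat : ℕ) : ℂ) = -(ν : ℂ) := by
        exact_mod_cast congrArg (fun z : ℤ => (z : ℂ)) (Int.toNat_of_nonneg (by omega : (0:ℤ) ≤ -ν))
      push_cast; rw [hh]; ring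
end

section
/- Optimality of water-filling for variance minimization: given nonnegative fixed levels c_1,...,c_n and a budget P_s ≥ 0, the allocation p_i = (λ − c_i)⁺ with λ chosen so that Σ_i p_i = P_s minimizes the variance of the totals (c_i + p_i)_{i=1}^n, i.e., minimizes Σ_i (c_i + p_i − (1/n)Σ_j (c_j + p_j))², over all p_i ≥ 0 with Σ_i p_i = P_s. -/
/-- Optimality of water-filling for variance minimization: with fixed levels
`c_i ≥ 0` and budget `P_s ≥ 0`, the allocation `p_i = (λ − c_i)⁺` (with `λ`
chosen so that `Σ p_i = P_s`) minimizes the variance of the totals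
`(c_i + p_i)` over all feasible nonnegative allocations. -/
theorem stmt_12 (n : ℕ) (hn : 1 ≤ n) (c : Fin n → ℝ) (hc : ∀ i, 0 ≤ c i)
    (Ps lam : ℝ) (hPs : 0 ≤ Ps)
    (hlam : (∑ i, max (lam - c i) 0) = Ps) :
    ∀ p : Fin n → ℝ, (∀ i, 0 ≤ p i) → (∑ i, p i) = Ps →
      (∑ i, (c i + max (lam - c i) 0
          - (1 / (n : ℝ)) * ∑ j, (c j + max (lam - c j) 0)) ^ 2)
        ≤ ∑ i, (c i + p i - (1 / (n : ℝ)) * ∑ j, (c j + p j)) ^ 2 := by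
  intro p hp hps
  set q : Fin n → ℝ := fun i => max (lam - c i) 0 with hq
  have hS : (∑ j, (c j + p j)) = ∑ j, (c j + q j) := by
    rw [Finset.sum_add_distrib, Finset.sum_add_distrib, hps, hlam]
  rw [hS]
  set m : ℝ := (1 / (n : ℝ)) * ∑ j, (c j + q j) with hm
  have hzero : (∑ i, (p i - q i)) = 0 := by
    rw [Finset.sum_sub_distrib, hps, hlam, sub_self]
  have hkey : ∀ i, 0 ≤ (p i - q i) * (c i + q i - lam) := by
    intro i
    rcases le_or_gt (lam - c i) 0 with h | h
    · have hq0 : q i = 0 := max_eq_right h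
      rw [hq0]
      exact mul_nonneg (by simpa using hp i) (by linarith)
    · have hq0 : q i = lam - c i := max_eq_left h.le
      rw [hq0]
      have : c i + (lam - c i) - lam = 0 := by ring
      rw [this, mul_zero]
  rw [← sub_nonneg, ← Finset.sum_sub_distrib]
  have hrw : ∀ i ∈ Finset.univ, (c i + p i - m) ^ 2 - (c i + q i - m) ^ 2
      = (p i - q i) ^ 2 + 2 * ((p i - q i) * (c i + q i - lam))
        + 2 * (lam - m) * (p i - q i) := by
    intro i _
    ring
  rw [Finset.sum_congr rfl hrw, Finset.sum_add_distrib, Finset.sum_add_distrib,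
    ← Finset.mul_sum, ← Finset.mul_sum, hzero, mul_zero, add_zero]
  have h1 : 0 ≤ ∑ i, (p i - q i) ^ 2 :=
    Finset.sum_nonneg fun i _ => sq_nonneg _
  have h2 : 0 ≤ ∑ i, (p i - q i) * (c i + q i - lam) :=
    Finset.sum_nonneg fun i _ => hkey i
  linarith
end
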